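/- Let γ : I → ℝ^n be a continuous generalized orbit of a convex foliation {C_r}_{r≥0}, and suppose γ is differentiable at some τ ∈ I with τ > 0 and γ′(τ) ≠ 0. Then −γ′(τ) lies in the interior of the normal cone N_{Ω(τ)}(γ(τ)), where Ω(τ) is the convex hull of {γ(t) : t ∈ I, t ≥ τ}. -/

import Mathlib

open Set Metric Filter Topology RealInnerProductSpace

/-- The normal cone of a convex set `K` at a point `u₀`. -/
def normalCone {n : ℕ} (K : Set (EuclideanSpace ℝ (Fin n))) (u₀ : EuclideanSpace ℝ (Fin n)) :
    Set (EuclideanSpace ℝ (Fin n)) :=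
  {v | ∀ u ∈ K, ⟪v, u - u₀⟫ ≤ 0}

/-- The set `sec⁻(τ)` of limits of backward unit secant vectors of the curve `γ` at `τ`. -/
def secMinus {n : ℕ} (I : Set ℝ) (γ : ℝ → EuclideanSpace ℝ (Fin n)) (τ : ℝ) :
    Set (EuclideanSpace ℝ (Fin n)) :=
  {q | ‖q‖ = 1 ∧ ∃ t : ℕ → ℝ, (∀ k, t k ∈ I) ∧ (∀ k, t k < τ) ∧
    Tendsto t atTop (nhds τ) ∧
    Tendsto (fun k => ‖γ (t k) - γ τ‖⁻¹ • (γ (t k) - γ τ)) atTop (nhds q)}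

/-- A family `{C r}_{r ≥ 0}` of nonempty compact convex sets is a *convex foliation* of
`ℝⁿ` if it is strictly nested (`r₁ < r₂ → C r₁ ⊆ int C r₂`) and the boundaries
`∂(C r)`, `r ≥ 0`, cover `ℝⁿ \ int (C 0)`. -/
def IsConvexFoliation {n : ℕ} (C : ℝ → Set (EuclideanSpace ℝ (Fin n))) : Prop :=
  (∀ r, 0 ≤ r → (C r).Nonempty ∧ IsCompact (C r) ∧ Convex ℝ (C r)) ∧
  (∀ r₁ r₂, 0 ≤ r₁ → r₁ < r₂ → C r₁ ⊆ interior (C r₂)) ∧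
  (⋃ r ∈ Ici (0 : ℝ), frontier (C r)) = univ \ interior (C 0)

/-- A continuous curve `γ : I → ℝⁿ` is a *generalized orbit* of the convex foliation
`{C r}` if its image avoids `int (C 0)`, the level function `r(·)` (determined by
`γ(t) ∈ ∂ C (r t)`) is strictly decreasing, and `sec⁻(t) ⊆ N_{C (r t)}(γ t)` for all
`t ∈ I`. -/
def IsGeneralizedOrbit {n : ℕ} (C : ℝ → Set (EuclideanSpace ℝ (Fin n)))
    (I : Set ℝ) (γ : ℝ → EuclideanSpace ℝ (Fin n)) (r : ℝ → ℝ) : Prop :=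
  ContinuousOn γ I ∧
  (∀ t ∈ I, γ t ∉ interior (C 0)) ∧
  (∀ t ∈ I, 0 ≤ r t ∧ γ t ∈ frontier (C (r t))) ∧
  (∀ t₁ ∈ I, ∀ t₂ ∈ I, t₁ < t₂ → r t₂ < r t₁) ∧
  (∀ t ∈ I, secMinus I γ t ⊆ normalCone (C (r t)) (γ t))


/-!
Since `γ` is differentiable at `τ` from the left, its backward secant direction at `τ` is
`-v / ‖v‖`, so the orbit condition gives `⟪v, u - γ τ⟫ ≥ 0` on `C (r τ)`, strictly on its
interior. Near `τ` the derivative yields `⟪v, γ t - γ τ⟫ ≥ ‖v‖ / 3 * ‖γ t - γ τ‖`; beyond some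
`s > τ` the orbit stays in the compact set `C (r s) ⊆ int C (r τ)`, where the ratio
`⟪v, u - γ τ⟫ / ‖u - γ τ‖` is bounded below by compactness. A uniform bound
`ε ‖u - γ τ‖ ≤ ⟪v, u - γ τ⟫` on the tail puts the ball of radius `ε` about `-v` into the normal
cone of the tail, hence of its convex hull.
-/

section InnerProductSpace

variable {E : Type*} [NormedAddCommGroup E] [InnerProductSpace ℝ E]

theorem inner_sub_pos_of_mem_interior {K : Set E} {x u v : E} (hv : v ≠ 0)
    (hK : ∀ w ∈ K, 0 ≤ ⟪v, w - x⟫) (hu : u ∈ interior K) : 0 < ⟪v, u - x⟫ := by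
  have hlim : Tendsto (fun c : ℝ => u - c • v) (𝓝[>] 0) (𝓝 u) := by
    have : Continuous (fun c : ℝ => u - c • v) := by fun_prop
    simpa using (this.tendsto 0).mono_left nhdsWithin_le_nhds
  obtain ⟨c, hcK, hc⟩ :=
    ((hlim.eventually (mem_interior_iff_mem_nhds.1 hu)).and self_mem_nhdsWithin).exists
  have hshift := hK _ hcK
  rw [sub_right_comm, inner_sub_right, real_inner_smul_right, real_inner_self_eq_norm_sq] at hshift
  have : 0 < c * ‖v‖ ^ 2 := by have := norm_pos_iff.2 hv; positivity
  linarith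

theorem IsCompact.exists_pos_mul_norm_sub_le_inner {K : Set E} {x v : E} (hK : IsCompact K)
    (hpos : ∀ u ∈ K, 0 < ⟪v, u - x⟫) : ∃ ε > 0, ∀ u ∈ K, ε * ‖u - x‖ ≤ ⟪v, u - x⟫ := by
  have hne : ∀ u ∈ K, u - x ≠ 0 := fun u hu h => by simpa [h] using hpos u hu
  have hcont : ContinuousOn (fun u => ⟪v, u - x⟫ / ‖u - x‖) K :=
    ContinuousOn.div (by fun_prop) (by fun_prop) fun u hu => norm_ne_zero_iff.2 (hne u hu)
  obtain ⟨ε, hε, hbound⟩ :=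
    hK.exists_forall_le' hcont fun u hu => div_pos (hpos u hu) (norm_pos_iff.2 (hne u hu))
  exact ⟨ε, hε, fun u hu => (le_div_iff₀ (norm_pos_iff.2 (hne u hu))).1 (hbound u hu)⟩

/-- With `h = t - τ` and `‖γ t - γ τ - h • v‖ ≤ h ‖v‖ / 2`, the inner product is at least
`h ‖v‖² / 2` and the norm at most `3 h ‖v‖ / 2`. -/
theorem HasDerivWithinAt.exists_mul_norm_sub_le_inner {γ : ℝ → E} {v : E} {s : Set ℝ} {τ : ℝ}
    (hv : HasDerivWithinAt γ v s τ) :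
    ∃ δ > 0, ∀ t ∈ s, t ∈ Ico τ (τ + δ) → ‖v‖ / 3 * ‖γ t - γ τ‖ ≤ ⟪v, γ t - γ τ⟫ := by
  rcases eq_or_ne v 0 with rfl | hv0
  · exact ⟨1, one_pos, fun t _ _ => by simp⟩
  obtain ⟨δ, hδ, hsmall⟩ := Metric.eventually_nhds_iff.1 (eventually_nhdsWithin_iff.1
    ((hasDerivWithinAt_iff_isLittleO.1 hv).def (c := ‖v‖ / 2) (by positivity)))
  refine ⟨δ, hδ, fun t ht ⟨hτt, htδ⟩ => ?_⟩
  set h := t - τ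
  set e := γ t - γ τ - h • v
  have hh : 0 ≤ h := sub_nonneg.2 hτt
  have he : ‖e‖ ≤ ‖v‖ / 2 * h := by
    have := hsmall (by rw [Real.dist_eq, abs_of_nonneg hh]; linarith) ht
    rwa [Real.norm_eq_abs, abs_of_nonneg hh] at this
  have hsplit : γ t - γ τ = h • v + e := by simp [e]
  have hinner : h * ‖v‖ ^ 2 - ‖v‖ * ‖e‖ ≤ ⟪v, γ t - γ τ⟫ := by
    rw [hsplit, inner_add_right, real_inner_smul_right, real_inner_self_eq_norm_sq]
    linarith [neg_le_of_abs_le (abs_real_inner_le_norm v e)]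
  have hnorm : ‖γ t - γ τ‖ ≤ h * ‖v‖ + ‖e‖ := by
    rw [hsplit]
    exact (norm_add_le _ _).trans_eq (by rw [norm_smul, Real.norm_eq_abs, abs_of_nonneg hh])
  nlinarith [norm_nonneg v]

end InnerProductSpace

theorem HasDerivWithinAt.tendsto_normalize_sub_left {V : Type*} [NormedAddCommGroup V]
    [NormedSpace ℝ V] {γ : ℝ → V} {v : V} {s : Set ℝ} {τ : ℝ} (hv : HasDerivWithinAt γ v s τ)
    (hv0 : v ≠ 0) :
    Tendsto (fun t => NormedSpace.normalize (γ t - γ τ)) (𝓝[s ∩ Iio τ] τ)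
      (𝓝 (-NormedSpace.normalize v)) := by
  have hslope : Tendsto (slope γ τ) (𝓝[s ∩ Iio τ] τ) (𝓝 v) :=
    (hasDerivWithinAt_iff_tendsto_slope.1 hv).mono_left
      (nhdsWithin_mono _ fun t ht => ⟨ht.1, ht.2.ne⟩)
  have hnormalize : ContinuousAt (fun w : V => -NormedSpace.normalize w) v := by
    unfold NormedSpace.normalize
    exact ((continuousAt_id.norm.inv₀ (norm_ne_zero_iff.2 hv0)).smul continuousAt_id).neg
  refine (hnormalize.tendsto.comp hslope).congr' ?_
  filter_upwards [self_mem_nhdsWithin] with t ht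
  have hlt : t - τ < 0 := sub_neg.2 ht.2
  rw [Function.comp_apply, ← NormedSpace.normalize_smul_of_neg hlt, slope_def_module,
    smul_inv_smul₀ hlt.ne]

section Euclidean

variable {n : ℕ}

theorem normalCone_convexHull (K : Set (EuclideanSpace ℝ (Fin n)))
    (x : EuclideanSpace ℝ (Fin n)) : normalCone (convexHull ℝ K) x = normalCone K x := by
  refine Subset.antisymm (fun w hw u hu => hw u (subset_convexHull ℝ K hu)) fun w hw u hu => ?_
  have hhalf : Convex ℝ {u | ⟪w, u⟫ ≤ ⟪w, x⟫} :=
    convex_halfSpace_le (innerSL ℝ w).toLinearMap.isLinear _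
  have hK : K ⊆ {u | ⟪w, u⟫ ≤ ⟪w, x⟫} := fun u hu => by
    simpa [inner_sub_right] using hw u hu
  simpa [inner_sub_right] using convexHull_min hK hhalf hu

theorem neg_smul_mem_normalCone_iff {K : Set (EuclideanSpace ℝ (Fin n))}
    {x v : EuclideanSpace ℝ (Fin n)} {c : ℝ} (hc : 0 < c) :
    -(c • v) ∈ normalCone K x ↔ ∀ u ∈ K, 0 ≤ ⟪v, u - x⟫ := by
  change (∀ u ∈ K, ⟪-(c • v), u - x⟫ ≤ 0) ↔ _
  simp only [inner_neg_left, real_inner_smul_left, neg_nonpos]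
  exact forall₂_congr fun u _ => mul_nonneg_iff_of_pos_left hc

theorem ball_neg_subset_normalCone {K : Set (EuclideanSpace ℝ (Fin n))}
    {x v : EuclideanSpace ℝ (Fin n)} {ε : ℝ} (hK : ∀ u ∈ K, ε * ‖u - x‖ ≤ ⟪v, u - x⟫) :
    ball (-v) ε ⊆ normalCone K x := by
  intro w hw u hu
  rw [mem_ball, dist_eq_norm, sub_neg_eq_add] at hw
  calc ⟪w, u - x⟫ = ⟪w + v, u - x⟫ - ⟪v, u - x⟫ := by rw [inner_add_left]; ring
    _ ≤ ‖w + v‖ * ‖u - x‖ - ε * ‖u - x‖ := sub_le_sub (real_inner_le_norm _ _) (hK u hu)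
    _ ≤ 0 := by nlinarith [norm_nonneg (u - x)]

theorem neg_normalize_mem_secMinus {I : Set ℝ} {γ : ℝ → EuclideanSpace ℝ (Fin n)}
    {v : EuclideanSpace ℝ (Fin n)} {a τ : ℝ} (hv : HasDerivWithinAt γ v I τ) (hv0 : v ≠ 0)
    (ha : a < τ) (hI : Ioo a τ ⊆ I) : -NormedSpace.normalize v ∈ secMinus I γ τ := by
  obtain ⟨t, -, ht, hlim⟩ := exists_seq_strictMono_tendsto' ha
  have hlim' : Tendsto t atTop (𝓝[I ∩ Iio τ] τ) :=
    tendsto_nhdsWithin_iff.2 ⟨hlim, Eventually.of_forall fun k => ⟨hI (ht k), (ht k).2⟩⟩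
  refine ⟨by rw [norm_neg, NormedSpace.norm_normalize hv0], t, fun k => hI (ht k),
    fun k => (ht k).2, hlim, ?_⟩
  exact (hv.tendsto_normalize_sub_left hv0).comp hlim'

end Euclidean

namespace IsGeneralizedOrbit

variable {n : ℕ} {C : ℝ → Set (EuclideanSpace ℝ (Fin n))} {I : Set ℝ}
  {γ : ℝ → EuclideanSpace ℝ (Fin n)} {r : ℝ → ℝ} {v : EuclideanSpace ℝ (Fin n)} {s τ : ℝ}

theorem mem_of_le (hC : IsConvexFoliation C) (hγ : IsGeneralizedOrbit C I γ r) (hs : s ∈ I)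
    {t : ℝ} (ht : t ∈ I) (hst : s ≤ t) : γ t ∈ C (r s) := by
  obtain ⟨hrt, hfrontier⟩ := hγ.2.2.1 t ht
  have hmem : γ t ∈ C (r t) := (hC.1 _ hrt).2.1.isClosed.frontier_subset hfrontier
  rcases hst.eq_or_lt with rfl | hst
  · exact hmem
  · exact interior_subset (hC.2.1 _ _ hrt (hγ.2.2.2.1 s hs t ht hst) hmem)

theorem exists_pos_mul_norm_sub_le_inner_of_lt (hC : IsConvexFoliation C)
    (hγ : IsGeneralizedOrbit C I γ r) (hτ : τ ∈ I) (hs : s ∈ I) (hτs : τ < s) (hv0 : v ≠ 0)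
    (hN : ∀ u ∈ C (r τ), 0 ≤ ⟪v, u - γ τ⟫) :
    ∃ ε > 0, ∀ t ∈ I, s ≤ t → ε * ‖γ t - γ τ‖ ≤ ⟪v, γ t - γ τ⟫ := by
  have hrs : 0 ≤ r s := (hγ.2.2.1 s hs).1
  have hpos : ∀ u ∈ C (r s), 0 < ⟪v, u - γ τ⟫ := fun u hu =>
    inner_sub_pos_of_mem_interior hv0 hN (hC.2.1 _ _ hrs (hγ.2.2.2.1 τ hτ s hs hτs) hu)
  obtain ⟨ε, hε, hbound⟩ := (hC.1 _ hrs).2.1.exists_pos_mul_norm_sub_le_inner hpos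
  exact ⟨ε, hε, fun t ht hst => hbound _ (hγ.mem_of_le hC hs ht hst)⟩

theorem exists_pos_mul_norm_sub_le_inner (hC : IsConvexFoliation C)
    (hγ : IsGeneralizedOrbit C I γ r) (hI : I.OrdConnected) (hτ : τ ∈ I)
    (hv : HasDerivWithinAt γ v I τ) (hv0 : v ≠ 0) (hN : ∀ u ∈ C (r τ), 0 ≤ ⟪v, u - γ τ⟫) :
    ∃ ε > 0, ∀ t ∈ I, τ ≤ t → ε * ‖γ t - γ τ‖ ≤ ⟪v, γ t - γ τ⟫ := by
  obtain ⟨δ, hδ, hnear⟩ := hv.exists_mul_norm_sub_le_inner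
  have hc : 0 < ‖v‖ / 3 := by have := norm_pos_iff.2 hv0; positivity
  by_cases hgap : ∃ s ∈ I, τ < s ∧ s < τ + δ
  · obtain ⟨s, hs, hτs, hsδ⟩ := hgap
    obtain ⟨ε, hε, hfar⟩ := hγ.exists_pos_mul_norm_sub_le_inner_of_lt hC hτ hs hτs hv0 hN
    refine ⟨min (‖v‖ / 3) ε, lt_min hc hε, fun t ht hτt => ?_⟩
    rcases lt_or_ge t s with hts | hst
    · exact (mul_le_mul_of_nonneg_right (min_le_left _ _) (norm_nonneg _)).trans
        (hnear t ht ⟨hτt, by linarith⟩)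
    · exact (mul_le_mul_of_nonneg_right (min_le_right _ _) (norm_nonneg _)).trans
        (hfar t ht hst)
  · refine ⟨‖v‖ / 3, hc, fun t ht hτt => hnear t ht ⟨hτt, ?_⟩⟩
    by_contra! htδ
    exact hgap ⟨τ + δ / 2, hI.out hτ ht ⟨by linarith, by linarith⟩, by linarith, by linarith⟩

end IsGeneralizedOrbit

theorem generalizedOrbit_deriv_mem_interior_normalCone_general {n : ℕ}
    (C : ℝ → Set (EuclideanSpace ℝ (Fin n))) (hC : IsConvexFoliation C)
    (T : ENNReal) (I : Set ℝ)
    (hI : I = {t : ℝ | 0 ≤ t ∧ ENNReal.ofReal t < T})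
    (γ : ℝ → EuclideanSpace ℝ (Fin n)) (r : ℝ → ℝ)
    (hγ : IsGeneralizedOrbit C I γ r)
    (τ : ℝ) (hτ : τ ∈ I) (hτ0 : 0 < τ)
    (v : EuclideanSpace ℝ (Fin n)) (hv : HasDerivWithinAt γ v I τ) (hv0 : v ≠ 0) :
    -v ∈ interior (normalCone (convexHull ℝ (γ '' (I ∩ Ici τ))) (γ τ)) := by
  have hIord : I.OrdConnected := by
    subst hI
    exact ⟨fun x hx y hy z hz => ⟨hx.1.trans hz.1, (ENNReal.ofReal_le_ofReal hz.2).trans_lt hy.2⟩⟩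
  have hIoo : Ioo 0 τ ⊆ I := by
    subst hI
    exact fun t ht => ⟨ht.1.le, (ENNReal.ofReal_le_ofReal ht.2.le).trans_lt hτ.2⟩
  have hN : ∀ u ∈ C (r τ), 0 ≤ ⟪v, u - γ τ⟫ :=
    (neg_smul_mem_normalCone_iff (inv_pos.2 (norm_pos_iff.2 hv0))).1
      (hγ.2.2.2.2 τ hτ (neg_normalize_mem_secMinus hv hv0 hτ0 hIoo))
  obtain ⟨ε, hε, hbound⟩ := hγ.exists_pos_mul_norm_sub_le_inner hC hIord hτ hv hv0 hN
  rw [normalCone_convexHull]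
  refine mem_interior.2 ⟨ball (-v) ε, ball_neg_subset_normalCone ?_, isOpen_ball, mem_ball_self hε⟩
  rintro _ ⟨t, ⟨ht, hτt⟩, rfl⟩
  exact hbound t ht hτt

/-- If a generalized orbit `γ` of a convex foliation is differentiable at `τ > 0` with
nonzero derivative `v`, then `-v` belongs to the interior of the normal cone at `γ τ` of
the convex hull of the tail `{γ t : t ∈ I, t ≥ τ}`. -/
theorem generalizedOrbit_deriv_mem_interior_normalCone {n : ℕ}
    (C : ℝ → Set (EuclideanSpace ℝ (Fin n))) (hC : IsConvexFoliation C)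
    (T : ENNReal) (hT : 0 < T) (I : Set ℝ)
    (hI : I = {t : ℝ | 0 ≤ t ∧ ENNReal.ofReal t < T})
    (γ : ℝ → EuclideanSpace ℝ (Fin n)) (r : ℝ → ℝ)
    (hγ : IsGeneralizedOrbit C I γ r)
    (τ : ℝ) (hτ : τ ∈ I) (hτ0 : 0 < τ)
    (v : EuclideanSpace ℝ (Fin n)) (hv : HasDerivWithinAt γ v I τ) (hv0 : v ≠ 0) :
    -v ∈ interior (normalCone (convexHull ℝ (γ '' (I ∩ Ici τ))) (γ τ)) :=
  generalizedOrbit_deriv_mem_interior_normalCone_general C hC T I hI γ r hγ τ hτ hτ0 v hv hv0
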